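/- If X is a second-countable π-space, then for every nonempty Polish space Y there exists a continuous open surjection from X onto Y. -/

import Mathlib

open Set Topology

namespace PiSpacePaper

/-- The restriction `p↾n` of `p : ℕ → ℕ`, as a list of length `n`. -/
def restrictSeq (p : ℕ → ℕ) (n : ℕ) : List ℕ := (List.range n).map p

/-- The basic clopen set `S_a` of the Baire space. -/
def cyl (a : List ℕ) : Set (ℕ → ℕ) := {p | restrictSeq p a.length = a}

/-- The fruit `⋂ n, V (p↾n)` of a branch `p` in a Souslin scheme `V`. -/
def fruit {X : Type*} (V : List ℕ → Set X) (p : ℕ → ℕ) : Set X :=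
  ⋂ n : ℕ, V (restrictSeq p n)

/-- A Souslin scheme `V` covers the set `s`. -/
def Covers {X : Type*} (V : List ℕ → Set X) (s : Set X) : Prop :=
  V [] = s ∧ ∀ a : List ℕ, V a = ⋃ n : ℕ, V (a ++ [n])

/-- A Souslin scheme `V` partitions the set `s`. -/
def Partitions {X : Type*} (V : List ℕ → Set X) (s : Set X) : Prop :=
  Covers V s ∧ ∀ (a : List ℕ) (n m : ℕ), n ≠ m → V (a ++ [n]) ∩ V (a ++ [m]) = ∅

/-- A Souslin scheme is complete iff all fruits are nonempty. -/
def Complete {X : Type*} (V : List ℕ → Set X) : Prop :=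
  ∀ p : ℕ → ℕ, (fruit V p).Nonempty

/-- A Souslin scheme has strict branches iff every fruit is a singleton. -/
def StrictBranches {X : Type*} (V : List ℕ → Set X) : Prop :=
  ∀ p : ℕ → ℕ, ∃ x : X, fruit V p = {x}

/-- A Souslin scheme is open iff all its members are open sets. -/
def OpenScheme {X : Type*} [TopologicalSpace X] (V : List ℕ → Set X) : Prop :=
  ∀ a : List ℕ, IsOpen (V a)

/-- `flesh V = ⋃ a, V a`. -/
def flesh {X : Type*} (V : List ℕ → Set X) : Set X := ⋃ a : List ℕ, V a

/-- `branches V x = {q ∈ ℕ^ℕ : x ∈ fruit V q}`. -/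
def branches {X : Type*} (V : List ℕ → Set X) (x : X) : Set (ℕ → ℕ) :=
  {q | x ∈ fruit V q}

/-- A family `γ` of subsets is a π-net for a space: all members are nonempty and every
nonempty open set contains a member. -/
def IsPiNet {X : Type*} [TopologicalSpace X] (γ : Set (Set X)) : Prop :=
  (∀ G ∈ γ, G.Nonempty) ∧
  ∀ U : Set X, IsOpen U → U.Nonempty → ∃ G ∈ γ, G ⊆ U

/-- A family `γ` of subsets is a π-base for a space: all members are nonempty open sets
and every nonempty open set contains a member. -/
def IsPiBase {X : Type*} [TopologicalSpace X] (γ : Set (Set X)) : Prop :=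
  (∀ G ∈ γ, IsOpen G ∧ G.Nonempty) ∧
  ∀ U : Set X, IsOpen U → U.Nonempty → ∃ G ∈ γ, G ⊆ U

/-- A π-space: there is an open Souslin scheme that partitions the space, has strict
branches, and whose family of members is a π-base. -/
def IsPiSpace (X : Type*) [TopologicalSpace X] : Prop :=
  ∃ V : List ℕ → Set X, OpenScheme V ∧ Partitions V Set.univ ∧ StrictBranches V ∧
    IsPiBase {S : Set X | ∃ a : List ℕ, S = V a}

/-- A Lusin π-base for a space. -/
def IsLusinPiBase {X : Type*} [TopologicalSpace X] (V : List ℕ → Set X) : Prop :=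
  OpenScheme V ∧ Partitions V Set.univ ∧ StrictBranches V ∧
  ∀ (x : X) (U : Set X), IsOpen U → x ∈ U →
    ∃ (a : List ℕ) (n : ℕ), x ∈ V a ∧ (⋃ i : ℕ, ⋃ _ : n ≤ i, V (a ++ [i])) ⊆ U

/-- A map is quasi-open iff the image of every nonempty open set has nonempty interior. -/
def IsQuasiOpen {X Y : Type*} [TopologicalSpace X] [TopologicalSpace Y] (f : X → Y) : Prop :=
  ∀ U : Set X, IsOpen U → U.Nonempty → (interior (f '' U)).Nonempty

/-- A π-net Souslin scheme on a space `X`: for every finite sequence `a`, the family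
`{V b : b ⊒ a}` is a π-net for the subspace `V a` of `X` (whose nonempty open sets are
exactly the nonempty sets `U ∩ V a` with `U` open in `X`). -/
def IsPiNetScheme {X : Type*} [TopologicalSpace X] (V : List ℕ → Set X) : Prop :=
  ∀ a : List ℕ,
    (∀ b : List ℕ, a <+: b → (V b).Nonempty) ∧
    ∀ U : Set X, IsOpen U → (U ∩ V a).Nonempty → ∃ b : List ℕ, a <+: b ∧ V b ⊆ U ∩ V a

/-- A π-base Souslin scheme on a space is an open π-net Souslin scheme. -/
def IsPiBaseScheme {X : Type*} [TopologicalSpace X] (V : List ℕ → Set X) : Prop :=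
  OpenScheme V ∧ IsPiNetScheme V

/-- A selector on a Souslin scheme `V`: a surjection of the Baire space onto `flesh V`
such that every fiber `f⁻¹(x)` is a dense subset of the subspace `branches V x` of the
Baire space. -/
def IsSelector {X : Type*} (V : List ℕ → Set X) (f : (ℕ → ℕ) → X) : Prop :=
  Set.range f = flesh V ∧
  ∀ x ∈ flesh V, f ⁻¹' {x} ⊆ branches V x ∧ branches V x ⊆ closure (f ⁻¹' {x})

/-- The topology `σ_{τ,f}` on the Baire space, generated by the subbase consisting of the
`τ`-preimages under `f` together with the basic sets `S_a`. -/
def sigmaTop {X : Type*} [TopologicalSpace X] (f : (ℕ → ℕ) → X) :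
    TopologicalSpace (ℕ → ℕ) :=
  TopologicalSpace.generateFrom
    ({S : Set (ℕ → ℕ) | ∃ U : Set X, IsOpen U ∧ S = f ⁻¹' U} ∪
      {S : Set (ℕ → ℕ) | ∃ a : List ℕ, S = cyl a})

/-- The Souslin scheme `V^g`, where `V^g_a = V_{g ∘ a}`. -/
def schemeComp {X : Type*} (V : List ℕ → Set X) (g : ℕ → ℕ) : List ℕ → Set X :=
  fun a => V (a.map g)

/-- A subset of the Baire space is dense-in-itself iff it has no isolated points. -/
def DenseInItself (B : Set (ℕ → ℕ)) : Prop :=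
  ∀ q ∈ B, q ∈ closure (B \ {q})

/-- `X` is a continuous open image of a π-space. -/
def IsContinuousOpenImageOfPiSpace (X : Type) [TopologicalSpace X] : Prop :=
  ∃ (Y : Type) (_ : TopologicalSpace Y) (f : Y → X),
    IsPiSpace Y ∧ Continuous f ∧ IsOpenMap f ∧ Function.Surjective f

/-- The topology `τ_N` on the Baire space generated by the sets `U \ A` with `U` open in
the Baire space and `A` nowhere dense in the Baire space. -/
def tauN : TopologicalSpace (ℕ → ℕ) :=
  TopologicalSpace.generateFrom
    {S : Set (ℕ → ℕ) | ∃ U A : Set (ℕ → ℕ), IsOpen U ∧ IsNowhereDense A ∧ S = U \ A}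

/-!
Through the partition `V`, a point `x` of `X` is determined by its branch `q ∈ ℕ^ℕ`, and
`x ↦ q` is continuous. Attach to every node `a` of the tree `ℕ^{<ω}` a nonempty open set
`W a ⊆ Y`, covered by the sets of its children, such that along every branch these sets shrink
to a point; sending `x` to the point of its branch gives a continuous map with `W a ⊆ f (V a)`.

For openness, fix a countable base `B k` of `X`. Along every branch the sets `W` are refined
infinitely often; at the node `a` reached by the `k`-th refinement, the π-base property gives a
path `l` with `V (a ++ l) ⊆ B k` whenever `B k` meets `V a`, and the construction keeps `W`
unchanged along that path. Hence `f (B k) ⊇ W (a ++ l) = W a`, which is a neighbourhood of `f x`.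
-/

open Metric TopologicalSpace

theorem restrictSeq_length (p : ℕ → ℕ) (n : ℕ) : (restrictSeq p n).length = n := by
  simp [restrictSeq]

theorem restrictSeq_succ (p : ℕ → ℕ) (n : ℕ) :
    restrictSeq p (n + 1) = restrictSeq p n ++ [p n] := by
  simp [restrictSeq, List.range_succ]

theorem restrictSeq_prefix (p : ℕ → ℕ) {m n : ℕ} (h : m ≤ n) :
    restrictSeq p m <+: restrictSeq p n := by
  have : restrictSeq p m = (restrictSeq p n).take m := by
    simp [restrictSeq, ← List.map_take, Nat.min_eq_left h]
  exact this ▸ List.take_prefix m _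

theorem restrictSeq_eq_of_forall_getD {p : ℕ → ℕ} {a : List ℕ}
    (h : ∀ i < a.length, p i = a.getD i 0) : restrictSeq p a.length = a := by
  refine List.ext_getElem (restrictSeq_length p _) fun i _ ha => ?_
  simp [restrictSeq, h i ha, ha]

theorem exists_branch_of_forall_exists_child {P : List ℕ → Prop}
    (h : ∀ a, P a → ∃ n, P (a ++ [n])) {a : List ℕ} (ha : P a) :
    ∃ q, restrictSeq q a.length = a ∧ ∀ m, a.length ≤ m → P (restrictSeq q m) := by
  choose! c hc using h
  let s : ℕ → List ℕ := fun k => k.rec a fun _ l => l ++ [c l]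
  have hs : ∀ k, P (s k) := fun k => k.rec ha fun _ ih => hc _ ih
  let q : ℕ → ℕ := fun i => if i < a.length then a.getD i 0 else c (s (i - a.length))
  have hq : ∀ k, restrictSeq q (a.length + k) = s k := by
    intro k
    induction k with
    | zero => exact restrictSeq_eq_of_forall_getD fun i hi => if_pos hi
    | succ k ih =>
      rw [← add_assoc, restrictSeq_succ, ih]
      simp [q, s]
  refine ⟨q, hq 0, fun m hm => ?_⟩
  obtain ⟨k, rfl⟩ := Nat.exists_eq_add_of_le hm
  exact hq k ▸ hs k

theorem subset_of_isPrefix {α : Type*} {W : List ℕ → Set α}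
    (hW : ∀ a n, W (a ++ [n]) ⊆ W a) {a b : List ℕ} (hab : a <+: b) : W b ⊆ W a := by
  obtain ⟨l, rfl⟩ := hab
  induction l using List.reverseRecOn with
  | nil => simp
  | append_singleton l n ih => exact (List.append_assoc a l [n] ▸ hW (a ++ l) n).trans ih

section Partitions

variable {X : Type*} {V : List ℕ → Set X}

theorem Partitions.append_subset (hP : Partitions V univ) (a : List ℕ) (n : ℕ) :
    V (a ++ [n]) ⊆ V a :=
  (subset_iUnion (fun i => V (a ++ [i])) n).trans (hP.1.2 a).ge

theorem Partitions.eq_of_mem_of_length_eq (hP : Partitions V univ) {x : X} {a b : List ℕ}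
    (hlen : a.length = b.length) (ha : x ∈ V a) (hb : x ∈ V b) : a = b := by
  induction a using List.reverseRecOn generalizing b with
  | nil => exact (List.length_eq_zero_iff.mp hlen.symm).symm
  | append_singleton a i ih =>
    obtain ⟨b, j, rfl⟩ : ∃ b' j, b = b' ++ [j] := by
      rcases List.eq_nil_or_concat' b with rfl | h
      · simp at hlen
      · exact h
    obtain rfl : a = b :=
      ih (by simpa using hlen) (hP.append_subset a i ha) (hP.append_subset b j hb)
    by_contra hij
    exact (hP.2 a i j fun h => hij (h ▸ rfl)).subset ⟨ha, hb⟩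

theorem Partitions.exists_mem_fruit (hP : Partitions V univ) (x : X) : ∃ q, x ∈ fruit V q := by
  have hchild : ∀ a, x ∈ V a → ∃ n, x ∈ V (a ++ [n]) := fun a hx => by
    rw [hP.1.2 a] at hx
    exact mem_iUnion.mp hx
  obtain ⟨q, -, hq⟩ :=
    exists_branch_of_forall_exists_child hchild (a := []) (by rw [hP.1.1]; trivial)
  exact ⟨q, mem_iInter.mpr fun m => hq m m.zero_le⟩

noncomputable def branchOf (V : List ℕ → Set X) (x : X) : ℕ → ℕ :=
  Classical.epsilon fun q => x ∈ fruit V q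

theorem Partitions.mem_restrictSeq_branchOf (hP : Partitions V univ) (x : X) (n : ℕ) :
    x ∈ V (restrictSeq (branchOf V x) n) :=
  mem_iInter.mp (Classical.epsilon_spec (hP.exists_mem_fruit x)) n

theorem Partitions.restrictSeq_branchOf (hP : Partitions V univ) {x : X} {a : List ℕ}
    (hx : x ∈ V a) : restrictSeq (branchOf V x) a.length = a :=
  hP.eq_of_mem_of_length_eq (restrictSeq_length _ _) (hP.mem_restrictSeq_branchOf x _) hx

theorem exists_append_subset [TopologicalSpace X] (hO : OpenScheme V) (hP : Partitions V univ)
    (hPB : IsPiBase {S | ∃ a, S = V a}) {U : Set X} (hU : IsOpen U) {a : List ℕ}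
    (hne : (U ∩ V a).Nonempty) : ∃ l, V (a ++ l) ⊆ U := by
  obtain ⟨_, ⟨c, rfl⟩, hc⟩ := hPB.2 (U ∩ V a) (hU.inter (hO a)) hne
  obtain ⟨y, hy⟩ := (hPB.1 _ ⟨c, rfl⟩).2
  -- `a` and `c` are both initial segments of the branch of `y`
  have ha := restrictSeq_prefix (branchOf V y) (le_max_left a.length c.length)
  have hc' := restrictSeq_prefix (branchOf V y) (le_max_right a.length c.length)
  rw [hP.restrictSeq_branchOf (hc hy).2] at ha
  rw [hP.restrictSeq_branchOf hy] at hc'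
  obtain ⟨l, hl⟩ := ha
  exact ⟨l, hl ▸ (subset_of_isPrefix hP.append_subset hc').trans (hc.trans inter_subset_left)⟩

noncomputable def witness (V : List ℕ → Set X) (U : Set X) (a : List ℕ) : List ℕ :=
  Classical.epsilon fun l => V (a ++ l) ⊆ U

theorem append_witness_subset {U : Set X} {a : List ℕ} (h : ∃ l, V (a ++ l) ⊆ U) :
    V (a ++ witness V U a) ⊆ U :=
  Classical.epsilon_spec h

end Partitions

section ShrinkingScheme

variable {Y : Type*} [MetricSpace Y]

structure IsShrinkingScheme (W : List ℕ → Set Y) : Prop where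
  nonempty : ∀ a, (W a).Nonempty
  append_subset : ∀ a n, W (a ++ [n]) ⊆ W a
  subset_iUnion : ∀ a, W a ⊆ ⋃ n, W (a ++ [n])
  exists_dist_lt : ∀ q ε, 0 < ε →
    ∃ m, ∀ y ∈ W (restrictSeq q m), ∀ z ∈ W (restrictSeq q m), dist y z < ε
  exists_closure_subset : ∀ q m, ∃ M, closure (W (restrictSeq q M)) ⊆ W (restrictSeq q m)

namespace IsShrinkingScheme

variable {W : List ℕ → Set Y}

theorem restrictSeq_anti (hW : IsShrinkingScheme W) (q : ℕ → ℕ) {m M : ℕ} (h : m ≤ M) :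
    W (restrictSeq q M) ⊆ W (restrictSeq q m) :=
  subset_of_isPrefix hW.append_subset (restrictSeq_prefix q h)

variable [CompleteSpace Y]

theorem existsUnique_mem (hW : IsShrinkingScheme W) (q : ℕ → ℕ) :
    ∃! y, ∀ m, y ∈ W (restrictSeq q m) := by
  choose y hy using fun m => hW.nonempty (restrictSeq q m)
  have hcauchy : CauchySeq y := by
    refine Metric.cauchySeq_iff'.mpr fun ε hε => ?_
    obtain ⟨N, hN⟩ := hW.exists_dist_lt q ε hε
    exact ⟨N, fun n hn => hN _ (hW.restrictSeq_anti q hn (hy n)) _ (hy N)⟩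
  obtain ⟨z, hz⟩ := cauchySeq_tendsto_of_complete hcauchy
  have hzcl : ∀ m, z ∈ closure (W (restrictSeq q m)) := fun m =>
    mem_closure_of_tendsto hz <| (Filter.eventually_ge_atTop m).mono fun n hn =>
      hW.restrictSeq_anti q hn (hy n)
  refine ⟨z, fun m => ?_, fun z' hz' => ?_⟩
  · obtain ⟨M, hM⟩ := hW.exists_closure_subset q m
    exact hM (hzcl M)
  · refine eq_of_forall_dist_le fun ε hε => ?_
    obtain ⟨N, hN⟩ := hW.exists_dist_lt q ε hε
    obtain ⟨M, hM⟩ := hW.exists_closure_subset q N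
    exact (hN _ (hz' N) _ (hM (hzcl M))).le

noncomputable def limit (hW : IsShrinkingScheme W) (q : ℕ → ℕ) : Y :=
  (hW.existsUnique_mem q).exists.choose

theorem limit_mem (hW : IsShrinkingScheme W) (q : ℕ → ℕ) (m : ℕ) :
    hW.limit q ∈ W (restrictSeq q m) :=
  (hW.existsUnique_mem q).exists.choose_spec m

theorem eq_limit (hW : IsShrinkingScheme W) {q : ℕ → ℕ} {y : Y}
    (hy : ∀ m, y ∈ W (restrictSeq q m)) : y = hW.limit q :=
  (hW.existsUnique_mem q).unique hy (hW.limit_mem q)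

theorem exists_limit_eq (hW : IsShrinkingScheme W) {a : List ℕ} {y : Y} (hy : y ∈ W a) :
    ∃ q, restrictSeq q a.length = a ∧ hW.limit q = y := by
  obtain ⟨q, hqa, hq⟩ := exists_branch_of_forall_exists_child
    (fun b hb => mem_iUnion.mp (hW.subset_iUnion b hb)) hy
  refine ⟨q, hqa, (hW.eq_limit fun m => ?_).symm⟩
  rcases le_total a.length m with h | h
  · exact hq m h
  · have hpre := restrictSeq_prefix q h
    rw [hqa] at hpre
    exact subset_of_isPrefix hW.append_subset hpre hy

variable {X : Type*} {V : List ℕ → Set X}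

noncomputable def induced (hW : IsShrinkingScheme W) (V : List ℕ → Set X) (x : X) : Y :=
  hW.limit (branchOf V x)

theorem induced_mem (hW : IsShrinkingScheme W) (hP : Partitions V univ) {x : X}
    {a : List ℕ} (hx : x ∈ V a) : hW.induced V x ∈ W a := by
  have := hW.limit_mem (branchOf V x) a.length
  rwa [hP.restrictSeq_branchOf hx] at this

theorem continuous_induced [TopologicalSpace X] (hW : IsShrinkingScheme W)
    (hO : OpenScheme V) (hP : Partitions V univ) : Continuous (hW.induced V) := by
  refine Metric.continuous_iff'.mpr fun x ε hε => ?_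
  obtain ⟨m, hm⟩ := hW.exists_dist_lt (branchOf V x) ε hε
  have hx := hP.mem_restrictSeq_branchOf x m
  filter_upwards [(hO _).mem_nhds hx] with x' hx'
  exact hm _ (hW.induced_mem hP hx') _ (hW.induced_mem hP hx)

theorem subset_image_induced (hW : IsShrinkingScheme W) (hP : Partitions V univ)
    (hS : StrictBranches V) (a : List ℕ) : W a ⊆ hW.induced V '' V a := by
  intro y hy
  obtain ⟨q, hqa, rfl⟩ := hW.exists_limit_eq hy
  obtain ⟨x, hx⟩ := hS q
  have hxq : ∀ n, x ∈ V (restrictSeq q n) :=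
    mem_iInter.mp (hx.symm ▸ mem_singleton x : x ∈ fruit V q)
  exact ⟨x, hqa ▸ hxq a.length, hW.eq_limit fun n => hW.induced_mem hP (hxq n)⟩

theorem surjective_induced (hW : IsShrinkingScheme W) (hP : Partitions V univ)
    (hS : StrictBranches V) (hroot : W [] = univ) : Function.Surjective (hW.induced V) :=
  fun y =>
    let ⟨x, _, hx⟩ := hW.subset_image_induced hP hS [] (hroot ▸ mem_univ y)
    ⟨x, hx⟩

theorem isOpenMap_induced [TopologicalSpace X] (hW : IsShrinkingScheme W)
    (hP : Partitions V univ) (hS : StrictBranches V) (hWo : ∀ a, IsOpen (W a))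
    (h : ∀ U, IsOpen U → ∀ x ∈ U, ∃ a l, x ∈ V a ∧ V (a ++ l) ⊆ U ∧ W a ⊆ W (a ++ l)) :
    IsOpenMap (hW.induced V) := by
  intro U hU
  refine isOpen_iff_forall_mem_open.mpr ?_
  rintro _ ⟨x, hxU, rfl⟩
  obtain ⟨a, l, hxa, hVU, hWW⟩ := h U hU x hxU
  exact ⟨W a, hWW.trans ((hW.subset_image_induced hP hS _).trans (image_mono hVU)), hWo a,
    hW.induced_mem hP hxa⟩

end IsShrinkingScheme

end ShrinkingScheme

section Refinement

variable {Y : Type*} [MetricSpace Y]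

theorem exists_ball_cover [SecondCountableTopology Y] {Q : Set Y} (hQ : IsOpen Q)
    (hne : Q.Nonempty) {ε : ℝ} (hε : 0 < ε) :
    ∃ (c : ℕ → Y) (r : ℕ → ℝ), (∀ n, 0 < r n ∧ r n ≤ ε ∧ closedBall (c n) (r n) ⊆ Q) ∧
      Q ⊆ ⋃ n, ball (c n) (r n) := by
  let I : Set (Y × ℝ) := {p | 0 < p.2 ∧ p.2 ≤ ε ∧ closedBall p.1 p.2 ⊆ Q}
  have hcover : Q ⊆ ⋃ p ∈ I, ball p.1 p.2 := fun y hy => by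
    obtain ⟨r, hr, hrQ⟩ := Metric.isOpen_iff.mp hQ y hy
    refine mem_biUnion (x := (y, min (r / 2) ε)) ⟨by positivity, min_le_right _ _, ?_⟩
      (mem_ball_self (by positivity))
    exact (closedBall_subset_ball ((min_le_left _ _).trans_lt (half_lt_self hr))).trans hrQ
  obtain ⟨T, hTI, hTc, hTU⟩ :=
    isOpen_biUnion_countable I (fun p => ball p.1 p.2) fun _ _ => isOpen_ball
  have hTne : T.Nonempty := by
    obtain ⟨y, hy⟩ := hne
    obtain ⟨p, hp, -⟩ := mem_iUnion₂.mp (hTU ▸ hcover hy)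
    exact ⟨p, hp⟩
  obtain ⟨u, rfl⟩ := hTc.exists_eq_range hTne
  refine ⟨fun n => (u n).1, fun n => (u n).2, fun n => hTI (mem_range_self n), ?_⟩
  rwa [← hTU, biUnion_range] at hcover

structure IsRefinement (R : Set Y → ℕ → ℕ → Set Y) : Prop where
  isOpen {Q} : IsOpen Q → Q.Nonempty → ∀ k n, IsOpen (R Q k n)
  nonempty {Q} : IsOpen Q → Q.Nonempty → ∀ k n, (R Q k n).Nonempty
  closure_subset {Q} : IsOpen Q → Q.Nonempty → ∀ k n, closure (R Q k n) ⊆ Q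
  dist_lt {Q} : IsOpen Q → Q.Nonempty → ∀ k n, ∀ y ∈ R Q k n, ∀ z ∈ R Q k n,
    dist y z < (1 / 2) ^ k
  subset_iUnion {Q} : IsOpen Q → Q.Nonempty → ∀ k, Q ⊆ ⋃ n, R Q k n

theorem exists_isRefinement [SecondCountableTopology Y] [Nonempty Y] :
    ∃ R : Set Y → ℕ → ℕ → Set Y, IsRefinement R := by
  choose! c r hcr hcover using fun (Q : Set Y) (hQ : IsOpen Q ∧ Q.Nonempty) (k : ℕ) =>
    exists_ball_cover hQ.1 hQ.2 (ε := (1 / 2) ^ (k + 1)) (by positivity)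
  refine ⟨fun Q k n => ball (c Q k n) (r Q k n), ⟨fun _ _ _ _ => isOpen_ball,
    fun {Q} hQ hne k n => nonempty_ball.mpr (hcr Q ⟨hQ, hne⟩ k n).1,
    fun {Q} hQ hne k n => closure_ball_subset_closedBall.trans (hcr Q ⟨hQ, hne⟩ k n).2.2,
    fun {Q} hQ hne k n y hy z hz => ?_, fun {Q} hQ hne k => hcover Q ⟨hQ, hne⟩ k⟩⟩
  calc dist y z ≤ dist y (c Q k n) + dist z (c Q k n) := dist_triangle_right _ _ _
    _ < r Q k n + r Q k n := add_lt_add hy hz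
    _ ≤ (1 / 2) ^ k := by linarith [(hcr Q ⟨hQ, hne⟩ k n).2.1, pow_succ (1 / 2 : ℝ) k]

end Refinement

section Tree

variable {X Y : Type*}

/-- The data at a node of the tree: `W` is the open set of `Y` attached to it, `level` the
number of refinements made along the way to it, and `pending` the rest of a witness path that
is being followed without refining. -/
structure Stage (Y : Type*) where
  node : List ℕ
  W : Set Y
  level : ℕ
  pending : List ℕ

variable (V : List ℕ → Set X) (B : ℕ → Set X) (R : Set Y → ℕ → ℕ → Set Y)

noncomputable def Stage.refine (s : Stage Y) (n : ℕ) : Stage Y :=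
  ⟨s.node ++ [n], R s.W (s.level + 1) n, s.level + 1,
    witness V (B (s.level + 1)) (s.node ++ [n])⟩

noncomputable def Stage.step (s : Stage Y) (n : ℕ) : Stage Y :=
  match s.pending with
  | [] => s.refine V B R n
  | h :: l => if n = h then ⟨s.node ++ [n], s.W, s.level, l⟩ else s.refine V B R n

noncomputable def stage (a : List ℕ) : Stage Y :=
  a.foldl (Stage.step V B R) ⟨[], univ, 0, witness V (B 0) []⟩

theorem stage_append (a : List ℕ) (n : ℕ) :
    stage V B R (a ++ [n]) = (stage V B R a).step V B R n := by
  simp [stage]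

theorem Stage.step_eq (s : Stage Y) (n : ℕ) :
    s.step V B R n = s.refine V B R n ∨
      ∃ l, s.pending = n :: l ∧ s.step V B R n = ⟨s.node ++ [n], s.W, s.level, l⟩ := by
  unfold Stage.step
  split
  · exact .inl rfl
  · rename_i h l hpend
    by_cases hn : n = h
    · subst hn
      exact .inr ⟨l, hpend, if_pos rfl⟩
    · exact .inl (if_neg hn)

theorem Stage.step_of_pending_eq {s : Stage Y} {n : ℕ} {l : List ℕ} (h : s.pending = n :: l) :
    s.step V B R n = ⟨s.node ++ [n], s.W, s.level, l⟩ := by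
  simp [Stage.step, h]

theorem stage_node (a : List ℕ) : (stage V B R a).node = a := by
  induction a using List.reverseRecOn with
  | nil => rfl
  | append_singleton a n ih =>
    rw [stage_append]
    rcases (stage V B R a).step_eq V B R n with h | ⟨l, -, h⟩ <;> simp [h, Stage.refine, ih]

theorem stage_W_append_pending (a : List ℕ) :
    (stage V B R (a ++ (stage V B R a).pending)).W = (stage V B R a).W := by
  generalize hl : (stage V B R a).pending = l
  induction l generalizing a with
  | nil => rw [List.append_nil]
  | cons n l ih =>
    have hstep : stage V B R (a ++ [n]) =
        ⟨a ++ [n], (stage V B R a).W, (stage V B R a).level, l⟩ := by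
      rw [stage_append, Stage.step_of_pending_eq V B R hl, stage_node]
    rw [List.append_cons, ih (a ++ [n]) (by rw [hstep]), hstep]

theorem stage_restrictSeq_succ (q : ℕ → ℕ) (m : ℕ) :
    stage V B R (restrictSeq q (m + 1)) = (stage V B R (restrictSeq q m)).step V B R (q m) := by
  rw [restrictSeq_succ, stage_append]

theorem exists_refine_step (q : ℕ → ℕ) (m : ℕ) :
    ∃ M, m ≤ M ∧
      stage V B R (restrictSeq q (M + 1)) = (stage V B R (restrictSeq q M)).refine V B R (q M) ∧
      (stage V B R (restrictSeq q M)).W = (stage V B R (restrictSeq q m)).W ∧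
      (stage V B R (restrictSeq q M)).level = (stage V B R (restrictSeq q m)).level := by
  induction hk : (stage V B R (restrictSeq q m)).pending.length using Nat.strong_induction_on
    generalizing m with
  | _ k ih =>
  rcases (stage V B R (restrictSeq q m)).step_eq V B R (q m) with h | ⟨l, hl, h⟩
  · exact ⟨m, le_rfl, by rw [stage_restrictSeq_succ, h], rfl, rfl⟩
  · rw [← stage_restrictSeq_succ] at h
    obtain ⟨M, hmM, hM, hW, hlev⟩ := ih l.length (by simp [← hk, hl]) (m + 1) (by rw [h])
    exact ⟨M, by omega, hM, by rw [hW, h], by rw [hlev, h]⟩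

theorem exists_level_eq (q : ℕ → ℕ) (k : ℕ) :
    ∃ m, (stage V B R (restrictSeq q m)).level = k ∧
      (stage V B R (restrictSeq q m)).pending = witness V (B k) (restrictSeq q m) := by
  induction k with
  | zero => exact ⟨0, rfl, rfl⟩
  | succ k ih =>
    obtain ⟨m, hk, -⟩ := ih
    obtain ⟨M, -, hM, -, hlev⟩ := exists_refine_step V B R q m
    refine ⟨M + 1, ?_, ?_⟩ <;> rw [hM] <;>
      simp [Stage.refine, hlev, hk, stage_node, restrictSeq_succ]

theorem exists_nonshrinking_path [TopologicalSpace X] (hO : OpenScheme V)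
    (hP : Partitions V univ) (hPB : IsPiBase {S | ∃ a, S = V a})
    (hB : IsTopologicalBasis (range B)) {U : Set X} (hU : IsOpen U) {x : X} (hx : x ∈ U) :
    ∃ a l, x ∈ V a ∧ V (a ++ l) ⊆ U ∧ (stage V B R a).W ⊆ (stage V B R (a ++ l)).W := by
  obtain ⟨_, ⟨k, rfl⟩, hxB, hBU⟩ := hB.exists_subset_of_mem_open hx hU
  obtain ⟨m, -, hpend⟩ := exists_level_eq V B R (branchOf V x) k
  have hxa := hP.mem_restrictSeq_branchOf x m
  have hsub := append_witness_subset
    (exists_append_subset hO hP hPB (hB.isOpen ⟨k, rfl⟩) ⟨x, hxB, hxa⟩)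
  refine ⟨_, _, hxa, hsub.trans hBU, ?_⟩
  rw [← hpend]
  exact (stage_W_append_pending V B R _).ge

variable [MetricSpace Y] {R}

def Stage.WellFormed (s : Stage Y) : Prop :=
  IsOpen s.W ∧ s.W.Nonempty ∧
    (0 < s.level → ∀ y ∈ s.W, ∀ z ∈ s.W, dist y z < (1 / 2) ^ s.level)

theorem Stage.WellFormed.step (hR : IsRefinement R) {s : Stage Y} (hs : s.WellFormed)
    (n : ℕ) : (s.step V B R n).WellFormed := by
  rcases s.step_eq V B R n with h | ⟨l, -, h⟩ <;> rw [h]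
  · exact ⟨hR.isOpen hs.1 hs.2.1 _ n, hR.nonempty hs.1 hs.2.1 _ n,
      fun _ => hR.dist_lt hs.1 hs.2.1 _ n⟩
  · exact hs

theorem Stage.WellFormed.step_W_subset (hR : IsRefinement R) {s : Stage Y}
    (hs : s.WellFormed) (n : ℕ) : (s.step V B R n).W ⊆ s.W := by
  rcases s.step_eq V B R n with h | ⟨l, -, h⟩ <;> rw [h]
  exact subset_closure.trans (hR.closure_subset hs.1 hs.2.1 _ n)

theorem Stage.WellFormed.W_subset_iUnion (hR : IsRefinement R) {s : Stage Y}
    (hs : s.WellFormed) : s.W ⊆ ⋃ n, (s.step V B R n).W := by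
  cases hpend : s.pending with
  | nil =>
    have h : ∀ n, s.step V B R n = s.refine V B R n := fun n => by simp [Stage.step, hpend]
    simpa only [h, Stage.refine] using hR.subset_iUnion hs.1 hs.2.1 (s.level + 1)
  | cons m l =>
    exact subset_iUnion_of_subset m (by rw [Stage.step_of_pending_eq V B R hpend])

theorem stage_wellFormed [Nonempty Y] (hR : IsRefinement R) (a : List ℕ) :
    (stage V B R a).WellFormed := by
  induction a using List.reverseRecOn with
  | nil => exact ⟨isOpen_univ, univ_nonempty, fun h => absurd h (lt_irrefl 0)⟩
  | append_singleton a n ih => rw [stage_append]; exact ih.step V B hR n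

theorem isShrinkingScheme_stage [Nonempty Y] (hR : IsRefinement R) :
    IsShrinkingScheme fun a => (stage V B R a).W where
  nonempty a := (stage_wellFormed V B hR a).2.1
  append_subset a n := by
    rw [stage_append]
    exact (stage_wellFormed V B hR a).step_W_subset V B hR n
  subset_iUnion a := by
    simp only [stage_append]
    exact (stage_wellFormed V B hR a).W_subset_iUnion V B hR
  exists_dist_lt q ε hε := by
    obtain ⟨k, hk⟩ := exists_pow_lt_of_lt_one hε (by norm_num : (1 / 2 : ℝ) < 1)
    obtain ⟨m, hm, -⟩ := exists_level_eq V B R q (k + 1)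
    refine ⟨m, fun y hy z hz => ?_⟩
    have := (stage_wellFormed V B hR _).2.2 (hm ▸ k.succ_pos) y hy z hz
    rw [hm] at this
    exact this.trans ((pow_le_pow_of_le_one (by norm_num) (by norm_num) k.le_succ).trans_lt hk)
  exists_closure_subset q m := by
    obtain ⟨M, -, hM, hW, -⟩ := exists_refine_step V B R q m
    have hs := stage_wellFormed V B hR (restrictSeq q M)
    exact ⟨M + 1, by rw [hM, ← hW]; exact hR.closure_subset hs.1 hs.2.1 _ _⟩

end Tree

/-- If X is a second-countable π-space, then there is a continuous open
surjection from X onto every nonempty Polish space. -/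
theorem statement5 {X : Type} [TopologicalSpace X] [SecondCountableTopology X]
    (h : IsPiSpace X) (Y : Type) [TopologicalSpace Y] [PolishSpace Y] [Nonempty Y] :
    ∃ f : X → Y, Continuous f ∧ IsOpenMap f ∧ Function.Surjective f := by
  obtain ⟨V, hO, hP, hS, hPB⟩ := h
  let := upgradeIsCompletelyMetrizable Y
  obtain ⟨B, hB⟩ := exists_seq_basis X
  obtain ⟨R, hR⟩ := exists_isRefinement (Y := Y)
  have hW := isShrinkingScheme_stage V B hR
  exact ⟨hW.induced V, hW.continuous_induced hO hP,
    hW.isOpenMap_induced hP hS (fun a => (stage_wellFormed V B hR a).1)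
      fun _ hU _ hx => exists_nonshrinking_path V B R hO hP hPB hB hU hx,
    hW.surjective_induced hP hS rfl⟩
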